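/- Let K be a positive integer and let α be a real skew-symmetric K×K matrix. If u: ℝ → ℝ^K is a twice continuously differentiable 2π-periodic map with u''(θ) + 2α·u'(θ) + α²·u(θ) = 0 for all θ, then u'(θ) + α·u(θ) = 0 for all θ. -/

import Mathlib

/-!
Put `v = u' + A u`. The equation says `v' = -A v`, so `‖v‖` is constant because `A` is
skew-adjoint. Skew-adjointness also gives `⟪u, v⟫' = ⟪u', v⟫ + ⟪A u, v⟫ = ‖v‖²`, so the
periodic function `⟪u, v⟫` has constant slope `‖v‖²`, which must therefore vanish.
-/

open Real MeasureTheory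
open scoped Matrix RealInnerProductSpace

/-- The action of a `K × K` real matrix on `ℝ^K` (with the Euclidean norm). -/
noncomputable def matAct {K : ℕ} (α : Matrix (Fin K) (Fin K) ℝ)
    (x : EuclideanSpace ℝ (Fin K)) : EuclideanSpace ℝ (Fin K) :=
  Matrix.toEuclideanLin α x

open Function

theorem Function.Periodic.eq_zero_of_hasDerivAt_const {g : ℝ → ℝ} {c T : ℝ}
    (hg : Periodic g T) (hT : T ≠ 0) (hg' : ∀ t, HasDerivAt g c t) : c = 0 := by
  have hconst : ∀ t, HasDerivAt (fun s => g s - s * c) 0 t := fun t =>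
    ((hg' t).sub (hasDerivAt_mul_const c)).congr_deriv (sub_self c)
  have hTc := is_const_of_deriv_eq_zero (fun t => (hconst t).differentiableAt)
    (fun t => (hconst t).deriv) T 0
  simp only [zero_mul, sub_zero, hg.eq, sub_eq_self] at hTc
  exact (mul_eq_zero.mp hTc).resolve_left hT

section NormedSpace

variable {F : Type*} [NormedAddCommGroup F] [NormedSpace ℝ F]

theorem Function.Periodic.deriv {f : ℝ → F} {c : ℝ} (hf : Periodic f c) :
    Periodic (deriv f) c := fun t => by
  rw [← deriv_comp_add_const, hf.funext]

noncomputable def twistedDeriv (A : F →L[ℝ] F) (u : ℝ → F) (t : ℝ) : F :=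
  deriv u t + A (u t)

theorem hasDerivAt_twistedDeriv {A : F →L[ℝ] F} {u : ℝ → F} (hu : Differentiable ℝ u)
    (hu' : Differentiable ℝ (deriv u))
    (h : ∀ t, deriv (deriv u) t + (2 : ℝ) • A (deriv u t) + A (A (u t)) = 0) (t : ℝ) :
    HasDerivAt (twistedDeriv A u) (-A (twistedDeriv A u t)) t := by
  refine ((hu' t).hasDerivAt.add
    (A.hasFDerivAt.comp_hasDerivAt t (hu t).hasDerivAt)).congr_deriv ?_
  rw [twistedDeriv, map_add, ← sub_eq_zero, ← h t]
  module

end NormedSpace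

variable {E : Type*} [NormedAddCommGroup E] [InnerProductSpace ℝ E] [CompleteSpace E]
  {A : E →L[ℝ] E}

namespace ContinuousLinearMap

theorem inner_apply_left_of_mem_skewAdjoint (hA : A ∈ skewAdjoint (E →L[ℝ] E)) (x y : E) :
    ⟪A x, y⟫ = -⟪x, A y⟫ := by
  rw [← adjoint_inner_right, ← star_eq_adjoint, skewAdjoint.mem_iff.mp hA, neg_apply,
    inner_neg_right]

theorem inner_apply_self_of_mem_skewAdjoint (hA : A ∈ skewAdjoint (E →L[ℝ] E)) (x : E) :
    ⟪A x, x⟫ = 0 := by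
  linarith [inner_apply_left_of_mem_skewAdjoint hA x x, real_inner_comm x (A x)]

end ContinuousLinearMap

open ContinuousLinearMap

theorem norm_sq_eq_of_hasDerivAt_neg_skew (hA : A ∈ skewAdjoint (E →L[ℝ] E)) {v : ℝ → E}
    (hv : ∀ t, HasDerivAt v (-A (v t)) t) (t : ℝ) : ‖v t‖ ^ 2 = ‖v 0‖ ^ 2 := by
  have hderiv : ∀ t, HasDerivAt (‖v ·‖ ^ 2) 0 t := fun t => (hv t).norm_sq.congr_deriv <| by
    rw [inner_neg_right, real_inner_comm, inner_apply_self_of_mem_skewAdjoint hA, neg_zero,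
      mul_zero]
  exact is_const_of_deriv_eq_zero (fun t => (hderiv t).differentiableAt)
    (fun t => (hderiv t).deriv) t 0

theorem hasDerivAt_inner_twistedDeriv (hA : A ∈ skewAdjoint (E →L[ℝ] E)) {u : ℝ → E}
    (hu : Differentiable ℝ u)
    (hv : ∀ t, HasDerivAt (twistedDeriv A u) (-A (twistedDeriv A u t)) t) (t : ℝ) :
    HasDerivAt (fun t => ⟪u t, twistedDeriv A u t⟫) (‖twistedDeriv A u t‖ ^ 2) t := by
  refine ((hu t).hasDerivAt.inner ℝ (hv t)).congr_deriv ?_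
  rw [inner_neg_right, ← inner_apply_left_of_mem_skewAdjoint hA, ← inner_add_left, add_comm,
    ← real_inner_self_eq_norm_sq]
  rfl

theorem twistedDeriv_eq_zero_of_periodic (hA : A ∈ skewAdjoint (E →L[ℝ] E)) {u : ℝ → E}
    {T : ℝ} (hu : Differentiable ℝ u) (hu' : Differentiable ℝ (deriv u)) (hper : Periodic u T)
    (hT : T ≠ 0) (h : ∀ t, deriv (deriv u) t + (2 : ℝ) • A (deriv u t) + A (A (u t)) = 0) :
    twistedDeriv A u = 0 := by
  have hv := hasDerivAt_twistedDeriv hu hu' h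
  have hnorm := norm_sq_eq_of_hasDerivAt_neg_skew hA hv
  have hinner_per : Periodic (fun t => ⟪u t, twistedDeriv A u t⟫) T := fun t => by
    simp only [twistedDeriv, hper t, hper.deriv t]
  have hv0 : ‖twistedDeriv A u 0‖ ^ 2 = 0 := hinner_per.eq_zero_of_hasDerivAt_const hT
    fun t => hnorm t ▸ hasDerivAt_inner_twistedDeriv hA hu hv t
  funext t
  simpa [hv0] using hnorm t

theorem Matrix.toEuclideanCLM_mem_skewAdjoint {n : Type*} [Fintype n] [DecidableEq n]
    {α : Matrix n n ℝ} (hα : αᵀ = -α) :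
    toEuclideanCLM (𝕜 := ℝ) α ∈ skewAdjoint (EuclideanSpace ℝ n →L[ℝ] EuclideanSpace ℝ n) := by
  rw [skewAdjoint.mem_iff, ← map_star, star_eq_conjTranspose,
    conjTranspose_eq_transpose_of_trivial, hα, map_neg]

theorem twisted_second_deriv_zero_general (K : ℕ)
    (α : Matrix (Fin K) (Fin K) ℝ) (hα : αᵀ = -α)
    (u : ℝ → EuclideanSpace ℝ (Fin K))
    (hu : ContDiff ℝ 2 u) (hper : Function.Periodic u (2 * Real.pi))
    (h : ∀ θ : ℝ, deriv (deriv u) θ + (2 : ℝ) • matAct α (deriv u θ)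
      + matAct α (matAct α (u θ)) = 0) :
    ∀ θ : ℝ, deriv u θ + matAct α (u θ) = 0 :=
  congrFun <| twistedDeriv_eq_zero_of_periodic (Matrix.toEuclideanCLM_mem_skewAdjoint hα)
    (hu.differentiable two_ne_zero) hu.differentiable_deriv_two hper (by positivity) h

/-- `∂_α² u = 0` implies `∂_α u = 0` for periodic maps (Section 4.2). -/
theorem twisted_second_deriv_zero (K : ℕ) (hK : 0 < K)
    (α : Matrix (Fin K) (Fin K) ℝ) (hα : αᵀ = -α)
    (u : ℝ → EuclideanSpace ℝ (Fin K))
    (hu : ContDiff ℝ 2 u) (hper : Function.Periodic u (2 * Real.pi))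
    (h : ∀ θ : ℝ, deriv (deriv u) θ + (2 : ℝ) • matAct α (deriv u θ)
      + matAct α (matAct α (u θ)) = 0) :
    ∀ θ : ℝ, deriv u θ + matAct α (u θ) = 0 :=
  twisted_second_deriv_zero_general K α hα u hu hper h
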